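/- arXiv:1404.2377 — 5 statements merged into one kernel-verified Lean document; each statement's English description precedes it below -/
import Mathlib

section
/- If D is a connected 3-dominating set of a connected graph G with minimum degree at least 3, then rx₃(G) ≤ rx₃(G[D]) + 3. -/
open SimpleGraph

/-- `c` is a `k`-rainbow coloring of `G`: every set of `k` vertices is contained in some
subtree of `G` whose edges receive pairwise distinct colors. -/
def SimpleGraph.IsKRainbowColoring {V : Type*} (G : SimpleGraph V) {t : ℕ}
    (c : Sym2 V → Fin t) (k : ℕ) : Prop :=
  ∀ S : Finset V, S.card = k →
    ∃ T : G.Subgraph, T.coe.IsTree ∧ ↑S ⊆ T.verts ∧ Set.InjOn c T.edgeSet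

/-- The `k`-rainbow index of `G`: the least number of colors in a `k`-rainbow coloring. -/
noncomputable def SimpleGraph.rx {V : Type*} (G : SimpleGraph V) (k : ℕ) : ℕ :=
  sInf {t | ∃ c : Sym2 V → Fin t, G.IsKRainbowColoring c k}

/-!
Let `r = rx_k(G[D])` and fix a rainbow colouring of `G[D]` with `r` colours; add `k` new
colours `0, …, k-1`. Every vertex `u ∉ D` has `k` distinct neighbours `A u 0, …, A u (k-1)`
in `D`, and the edge from `u` to `A u i` gets the new colour `i`. Enumerate a `k`-set `S` as
`p 0, …, p (k-1)` and anchor `p i` at itself if `p i ∈ D` and at `A (p i) i` otherwise. A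
rainbow tree of `G[D]` through the at most `k` anchors exists, and hanging the pendant edges
`p i — A (p i) i` on it gives a tree of `G` through `S`; the pendant edges carry pairwise
distinct new colours, so it is rainbow.
-/

open Finset Function

namespace SimpleGraph

variable {V : Type*} {G : SimpleGraph V}

theorem IsAcyclic.of_induce_of_support_subset {s : Set V} (h : (G.induce s).IsAcyclic)
    (hs : G.support ⊆ s) : G.IsAcyclic := by
  intro a c hc
  have hcs : ∀ x ∈ c.support, x ∈ s := fun x hx =>
    hs (mem_support_of_mem_walk_support c hc.not_nil hx)
  refine h (c.induce s hcs) ((Walk.isCycle_map_iff_of_injective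
    (f := (Embedding.induce s).toHom) Subtype.val_injective).mp ?_)
  rwa [Walk.map_induce]

theorem IsAcyclic.spanningCoe {s : Set V} {H : SimpleGraph s} (h : H.IsAcyclic) :
    H.spanningCoe.IsAcyclic := by
  rw [← induce_spanningCoe (G := H)] at h
  refine h.of_induce_of_support_subset fun v hv => ?_
  obtain ⟨w, hvw⟩ := (mem_support _).mp hv
  exact Subgraph.mem_of_adj_spanningCoe H hvw

namespace Subgraph

theorem isAcyclic_spanningCoe_iff (H : G.Subgraph) :
    H.spanningCoe.IsAcyclic ↔ H.coe.IsAcyclic :=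
  ⟨fun h => h.embedding H.coeEmbeddingSpanningCoe,
    fun h => H.spanningCoe_coe ▸ h.spanningCoe⟩

theorem isTree_coe_sup_subgraphOfAdj {T : G.Subgraph} (hT : T.coe.IsTree) {v w : V}
    (hv : v ∈ T.verts) (hw : w ∉ T.verts) (hadj : G.Adj v w) :
    (T ⊔ G.subgraphOfAdj hadj).coe.IsTree := by
  refine ⟨Subgraph.connected_iff'.mp <| connected_sup
    (Subgraph.connected_iff'.mpr hT.connected).preconnected
    (subgraphOfAdj_connected hadj).preconnected ⟨v, hv, by simp⟩, ?_⟩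
  have hspan : (T ⊔ G.subgraphOfAdj hadj).spanningCoe = T.spanningCoe ⊔ edge v w := by
    ext a b
    simp [edge_adj]
  have hreach : ¬T.spanningCoe.Reachable v w := fun h => by
    obtain ⟨y, hwy⟩ := (mem_support _).mp (mem_support_of_reachable hadj.ne.symm h.symm)
    exact hw hwy.fst_mem
  rw [← isAcyclic_spanningCoe_iff, hspan]
  exact ((isAcyclic_spanningCoe_iff T).mpr hT.isAcyclic).sup_edge_of_not_reachable hreach

theorem exists_isTree_le_mem_verts {T : G.Subgraph} (hT : T.coe.IsTree) {v w : V}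
    (hv : v ∈ T.verts) (hadj : G.Adj v w) :
    ∃ T' : G.Subgraph, T ≤ T' ∧ T'.coe.IsTree ∧ w ∈ T'.verts ∧
      T'.edgeSet ⊆ insert s(v, w) T.edgeSet := by
  by_cases hw : w ∈ T.verts
  · exact ⟨T, le_rfl, hT, hw, Set.subset_insert _ _⟩
  · refine ⟨T ⊔ G.subgraphOfAdj hadj, le_sup_left, isTree_coe_sup_subgraphOfAdj hT hv hw hadj,
      by simp, ?_⟩
    simp [edgeSet_sup, edgeSet_subgraphOfAdj, Set.union_singleton]

theorem exists_isTree_le_forall_mem_verts {ι : Type*} {T : G.Subgraph} (hT : T.coe.IsTree)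
    (b u : ι → V) (s : Finset ι) (hb : ∀ i ∈ s, b i ∈ T.verts)
    (hadj : ∀ i ∈ s, G.Adj (b i) (u i)) :
    ∃ T' : G.Subgraph, T ≤ T' ∧ T'.coe.IsTree ∧ (∀ i ∈ s, u i ∈ T'.verts) ∧
      T'.edgeSet ⊆ T.edgeSet ∪ (fun i => s(b i, u i)) '' s := by
  classical
  induction s using Finset.induction_on with
  | empty => exact ⟨T, le_rfl, hT, by simp, by simp⟩
  | insert j s _ ih =>
    obtain ⟨T₁, hle₁, hT₁, hu₁, hE₁⟩ := ih (fun i hi => hb i (mem_insert_of_mem hi))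
      (fun i hi => hadj i (mem_insert_of_mem hi))
    obtain ⟨T₂, hle₂, hT₂, hu₂, hE₂⟩ :=
      exists_isTree_le_mem_verts hT₁ (verts_mono hle₁ (hb j (mem_insert_self j s)))
        (hadj j (mem_insert_self j s))
    refine ⟨T₂, hle₁.trans hle₂, hT₂, fun i hi => ?_, ?_⟩
    · rcases mem_insert.mp hi with rfl | hi
      · exact hu₂
      · exact verts_mono hle₂ (hu₁ i hi)
    · refine hE₂.trans (Set.insert_subset ?_ (hE₁.trans ?_))
      · simp
      · gcongr; simp

end Subgraph

theorem Connected.exists_isKRainbowColoring [Finite V] (hG : G.Connected) (k : ℕ) :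
    ∃ t, ∃ c : Sym2 V → Fin t, G.IsKRainbowColoring c k := by
  obtain ⟨T, hle, hT⟩ := hG.exists_isTree_le
  refine ⟨_, Finite.equivFin (Sym2 V), fun S _ => ⟨toSubgraph T hle, ?_, fun v _ => trivial,
    (Finite.equivFin _).injective.injOn⟩⟩
  exact ((toSubgraph T hle).spanningCoeEquivCoeOfSpanning
    (toSubgraph.isSpanning T hle)).isTree_iff.mp hT

theorem Connected.exists_isKRainbowColoring_rx [Finite V] (hG : G.Connected) (k : ℕ) :
    ∃ c : Sym2 V → Fin (G.rx k), G.IsKRainbowColoring c k :=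
  Nat.sInf_mem (hG.exists_isKRainbowColoring k)

theorem IsKRainbowColoring.exists_isTree_of_card_le [Finite V] {t k : ℕ} {c : Sym2 V → Fin t}
    (hc : G.IsKRainbowColoring c k) {S : Finset V} (hS : #S ≤ k) (hk : k ≤ Nat.card V) :
    ∃ T : G.Subgraph, T.coe.IsTree ∧ ↑S ⊆ T.verts ∧ Set.InjOn c T.edgeSet := by
  have := Fintype.ofFinite V
  obtain ⟨S', hSS', -, hS'⟩ := exists_subsuperset_card_eq (subset_univ S) hS
    (by simpa [Nat.card_eq_fintype_card] using hk)
  obtain ⟨T, hT, hS'T, hinj⟩ := hc S' hS'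
  exact ⟨T, hT, (coe_subset.mpr hSS').trans hS'T, hinj⟩

section ExtendColoring

variable {D : Set V} {r k : ℕ}

open Classical in
noncomputable def pendantColor [NeZero r] (a : Fin k → V) (d : V) : Fin r ⊕ Fin k :=
  if h : ∃ i, a i = d then .inr h.choose else .inl 0

theorem pendantColor_apply [NeZero r] {a : Fin k → V} (ha : Injective a) (i : Fin k) :
    pendantColor (r := r) a (a i) = .inr i := by
  have h : ∃ j, a j = a i := ⟨i, rfl⟩
  rw [pendantColor, dif_pos h, ha h.choose_spec]

/- Old colours are `inl`, new colours `inr`: an edge `s(A u i, u)` with `u ∉ D` and `A u i ∈ D`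
gets the new colour `i`. Edges of no use to the trees built below get the junk colour `inl 0`. -/
open Classical in
noncomputable def extendColoring [NeZero r] (cD : Sym2 D → Fin r) (A : V → Fin k → V) :
    Sym2 V → Fin r ⊕ Fin k :=
  Sym2.lift ⟨fun u v =>
    if hu : u ∈ D then
      if hv : v ∈ D then .inl (cD s(⟨u, hu⟩, ⟨v, hv⟩)) else pendantColor (A v) u
    else if v ∈ D then pendantColor (A u) v else .inl 0, fun u v => by
    by_cases hu : u ∈ D <;> by_cases hv : v ∈ D <;> simp [hu, hv, Sym2.eq_swap]⟩

theorem extendColoring_map_val [NeZero r] (cD : Sym2 D → Fin r) (A : V → Fin k → V)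
    (e : Sym2 D) : extendColoring cD A (e.map Subtype.val) = .inl (cD e) := by
  induction e using Sym2.ind with
  | h a b => simp [extendColoring]

theorem extendColoring_pendant [NeZero r] (cD : Sym2 D → Fin r) {A : V → Fin k → V} {u : V}
    (hu : u ∉ D) (hA : Injective (A u)) {i : Fin k} (hAi : A u i ∈ D) :
    extendColoring cD A s(A u i, u) = .inr i := by
  simp [extendColoring, hu, hAi, pendantColor_apply hA]

theorem injOn_extendColoring [NeZero r] {cD : Sym2 D → Fin r} {A : V → Fin k → V}
    (hA : ∀ u ∉ D, Injective (A u) ∧ ∀ i, A u i ∈ D) {T : (G.induce D).Subgraph}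
    (hT : Set.InjOn cD T.edgeSet) {p : Fin k → V} {s : Set (Fin k)}
    (hs : ∀ i ∈ s, p i ∉ D) :
    Set.InjOn (extendColoring cD A)
      ((T.map (Copy.induce G D).toHom).edgeSet ∪ (fun i => s(A (p i) i, p i)) '' s) := by
  have hE₁ : Set.EqOn (Sum.inl ∘ cD) (extendColoring cD A ∘ Sym2.map Subtype.val) T.edgeSet :=
    fun e _ => (extendColoring_map_val cD A e).symm
  have hE₂ : Set.EqOn Sum.inr (extendColoring cD A ∘ fun i => s(A (p i) i, p i)) s :=
    fun i hi => (extendColoring_pendant cD (hs i hi) (hA _ (hs i hi)).1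
      ((hA _ (hs i hi)).2 i)).symm
  have hne : ∀ e₁ ∈ (T.map (Copy.induce G D).toHom).edgeSet,
      ∀ e₂ ∈ (fun i => s(A (p i) i, p i)) '' s,
        extendColoring cD A e₁ ≠ extendColoring cD A e₂ := by
    rw [Subgraph.edgeSet_map]
    rintro _ ⟨e, -, rfl⟩ _ ⟨i, hi, rfl⟩
    exact (extendColoring_map_val cD A e).trans_ne (Sum.inl_ne_inr.trans_eq (hE₂ hi))
  rw [Set.injOn_union (Set.disjoint_left.mpr fun e h₁ h₂ => hne e h₁ e h₂ rfl)]
  refine ⟨?_, ?_, hne⟩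
  · rw [Subgraph.edgeSet_map]
    exact ((Sum.inl_injective.comp_injOn hT).congr hE₁).image_of_comp
  · exact (Sum.inr_injective.injOn.congr hE₂).image_of_comp

theorem exists_injective_neighbors_mem [Finite V]
    (hdom : ∀ v ∉ D, k ≤ (D ∩ G.neighborSet v).ncard) :
    ∃ A : V → Fin k → V,
      ∀ u ∉ D, Injective (A u) ∧ (∀ i, A u i ∈ D) ∧ ∀ i, G.Adj (A u i) u := by
  have hfamily : ∀ u, ∃ a : Fin k → V, u ∉ D →
      Injective a ∧ (∀ i, a i ∈ D) ∧ ∀ i, G.Adj (a i) u := by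
    intro u
    by_cases hu : u ∈ D
    · exact ⟨fun _ => u, fun h => (h hu).elim⟩
    · have := Fintype.ofFinite ↥(D ∩ G.neighborSet u)
      obtain ⟨f⟩ := Function.Embedding.nonempty_of_card_le (α := Fin k)
        (β := ↥(D ∩ G.neighborSet u)) (by
          rw [Fintype.card_fin, ← Nat.card_eq_fintype_card, Nat.card_coe_set_eq]
          exact hdom u hu)
      exact ⟨fun i => f i, fun _ => ⟨Subtype.val_injective.comp f.injective,
        fun i => (f i).2.1, fun i => (f i).2.2.symm⟩⟩
  choose A hA using hfamily
  exact ⟨A, fun u hu => hA u hu⟩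

theorem le_natCard_of_card_eq [Finite V] {A : V → Fin k → V}
    (hA : ∀ u ∉ D, Injective (A u) ∧ ∀ i, A u i ∈ D) {S : Finset V} (hS : #S = k) :
    k ≤ Nat.card D := by
  by_cases hSD : ∀ x ∈ S, x ∈ D
  · simpa [hS] using Nat.card_le_card_of_injective (fun x : S => (⟨x, hSD x x.2⟩ : D))
      fun _ _ h => Subtype.ext (Subtype.mk.inj h)
  · push Not at hSD
    obtain ⟨u, -, hu⟩ := hSD
    simpa using Nat.card_le_card_of_injective (fun i => (⟨A u i, (hA u hu).2 i⟩ : D))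
      fun i j h => (hA u hu).1 (Subtype.mk.inj h)

theorem IsKRainbowColoring.extend [Finite V] [NeZero r] {cD : Sym2 D → Fin r}
    (hcD : (G.induce D).IsKRainbowColoring cD k) {A : V → Fin k → V}
    (hA : ∀ u ∉ D, Injective (A u) ∧ (∀ i, A u i ∈ D) ∧ ∀ i, G.Adj (A u i) u) :
    G.IsKRainbowColoring (finSumFinEquiv ∘ extendColoring cD A) k := by
  classical
  intro S hS
  have hAD : ∀ u ∉ D, Injective (A u) ∧ ∀ i, A u i ∈ D :=
    fun u hu => ⟨(hA u hu).1, (hA u hu).2.1⟩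
  obtain ⟨p, hSp⟩ : ∃ p : Fin k → V, ↑S ⊆ Set.range p :=
    ⟨fun i => S.equivFin.symm (Fin.cast hS.symm i),
      fun x hx => ⟨Fin.cast hS (S.equivFin ⟨x, hx⟩), by simp⟩⟩
  set b : Fin k → V := fun i => if p i ∈ D then p i else A (p i) i
  have hbD : ∀ i, b i ∈ D := fun i => by
    by_cases h : p i ∈ D
    · simp [b, h]
    · simpa [b, h] using (hA _ h).2.1 i
  obtain ⟨T, hT, hbT, hinj⟩ := hcD.exists_isTree_of_card_le
    (S := univ.image fun i => (⟨b i, hbD i⟩ : D)) (card_image_le.trans (by simp))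
    (le_natCard_of_card_eq hAD hS)
  set T₀ := T.map (Copy.induce G D).toHom
  have hbT₀ : ∀ i, b i ∈ T₀.verts := fun i => ⟨⟨b i, hbD i⟩, hbT (by simp), rfl⟩
  obtain ⟨T', hle, hT', hpT', hE⟩ := T₀.exists_isTree_le_forall_mem_verts
    (((Copy.induce G D).isoSubgraphMap T).isTree_iff.mp hT) (fun i => A (p i) i) p
    (univ.filter fun i => p i ∉ D) (fun i hi => by simpa [b, (mem_filter.mp hi).2] using hbT₀ i)
    (fun i hi => (hA _ (mem_filter.mp hi).2).2.2 i)
  refine ⟨T', hT', ?_, finSumFinEquiv.injective.comp_injOn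
    ((injOn_extendColoring hAD hinj (s := {i | p i ∉ D}) fun _ hi => hi).mono ?_)⟩
  · rintro _ hx
    obtain ⟨i, rfl⟩ := hSp hx
    by_cases h : p i ∈ D
    · exact Subgraph.verts_mono hle (by simpa [b, h] using hbT₀ i)
    · exact hpT' i (by simp [h])
  · simpa [T₀] using hE

theorem rx_le_rx_induce_add [Finite V] (hD : (G.induce D).Connected)
    (hdom : ∀ v ∉ D, k ≤ (D ∩ G.neighborSet v).ncard) :
    G.rx k ≤ (G.induce D).rx k + k := by
  obtain ⟨cD, hcD⟩ := hD.exists_isKRainbowColoring_rx k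
  obtain ⟨d⟩ := hD.nonempty
  have : NeZero ((G.induce D).rx k) := ⟨(cD s(d, d)).pos.ne'⟩
  obtain ⟨A, hA⟩ := exists_injective_neighbors_mem hdom
  exact Nat.sInf_le ⟨_, hcD.extend hA⟩

end ExtendColoring

end SimpleGraph

theorem stmt3_general {V : Type*} [Fintype V] (G : SimpleGraph V) (D : Set V)
    (hDconn : (G.induce D).Connected)
    (hDdom : ∀ v ∉ D, 3 ≤ (D ∩ G.neighborSet v).ncard) :
    G.rx 3 ≤ (G.induce D).rx 3 + 3 :=
  rx_le_rx_induce_add hDconn hDdom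

/-- If `D` is a connected 3-dominating set of a connected graph `G` with minimum degree at
least 3, then `rx₃(G) ≤ rx₃(G[D]) + 3`. -/
theorem stmt3 {V : Type*} [Fintype V] (G : SimpleGraph V) (hG : G.Connected)
    (hδ : ∀ v : V, 3 ≤ (G.neighborSet v).ncard) (D : Set V)
    (hDconn : (G.induce D).Connected)
    (hDdom : ∀ v ∉ D, 3 ≤ (D ∩ G.neighborSet v).ncard) :
    G.rx 3 ≤ (G.induce D).rx 3 + 3 :=
  stmt3_general G D hDconn hDdom
end

section
/- Every connected threshold graph G with minimum degree at least 3 satisfies rx₃(G) ≤ 5. -/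
open SimpleGraph

/-!
In a threshold graph with minimum degree at least 3, the three heaviest vertices `a`, `b`, `c`
are adjacent to every other vertex `v`: since `v` has a neighbour `u` outside the at most two
vertices heavier than the one in question, `w u` is at most its weight, and the threshold
inequality for `vu` carries over. Colour `ab` and `ac` with `3` and `4`, and every other edge at
`a`, `b`, `c` with `0`, `1`, `2` respectively. Any three vertices `x`, `y`, `z` are then spanned
by the path `b - a - c` together with at most the legs `ax`, `by`, `cz`, and these edges have
distinct colours.
-/

theorem Finset.exists_notMem_forall_notMem_le {ι β : Type*} [Fintype ι] [DecidableEq ι]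
    [LinearOrder β] (f : ι → β) {A : Finset ι} (hA : A.card < Fintype.card ι) :
    ∃ x ∉ A, ∀ u ∉ A, f u ≤ f x := by
  have hne : Aᶜ.Nonempty := by rw [← Finset.card_pos, Finset.card_compl]; omega
  obtain ⟨x, hx, hmax⟩ := Aᶜ.exists_max_image f hne
  exact ⟨x, Finset.mem_compl.1 hx, fun u hu => hmax u (Finset.mem_compl.2 hu)⟩

namespace SimpleGraph

variable {V : Type*} {G : SimpleGraph V}

theorem rx_le_of_isKRainbowColoring {t k : ℕ} {c : Sym2 V → Fin t}
    (hc : G.IsKRainbowColoring c k) : G.rx k ≤ t :=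
  Nat.sInf_le ⟨c, hc⟩

namespace Subgraph

variable {T : G.Subgraph}

theorem not_reachable_spanningCoe_of_notMem {u v : V} (huv : u ≠ v) (hv : v ∉ T.verts) :
    ¬T.spanningCoe.Reachable u v := by
  rintro ⟨p⟩
  cases p.reverse with
  | nil => exact huv rfl
  | cons h _ => exact hv (T.edge_vert h)

theorem isAcyclic_spanningCoe_sup_subgraphOfAdj (hT : T.spanningCoe.IsAcyclic) {u v : V}
    (huv : G.Adj u v) (hv : v ∉ T.verts) : (T ⊔ G.subgraphOfAdj huv).spanningCoe.IsAcyclic := by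
  rw [sup_spanningCoe, spanningCoe_subgraphOfAdj]
  exact hT.sup_edge_of_not_reachable (not_reachable_spanningCoe_of_notMem huv.ne hv)

theorem Connected.sup_subgraphOfAdj (hT : T.Connected) {u v : V} (huv : G.Adj u v)
    (hu : u ∈ T.verts) : (T ⊔ G.subgraphOfAdj huv).Connected :=
  connected_sup hT.preconnected (subgraphOfAdj_connected huv).preconnected ⟨u, hu, by simp⟩

theorem Connected.isTree_coe (hT : T.Connected) (hTa : T.spanningCoe.IsAcyclic) :
    T.coe.IsTree :=
  ⟨hT.coe, hTa.induce T.verts⟩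

theorem Connected.exists_le_mem_verts {P : Sym2 V → Prop} (hT : T.Connected)
    (hTa : T.spanningCoe.IsAcyclic) (hTP : ∀ e ∈ T.edgeSet, P e) {p v : V} (hp : p ∈ T.verts)
    (hpv : v ∉ T.verts → G.Adj p v ∧ P s(p, v)) :
    ∃ T' : G.Subgraph, T ≤ T' ∧ T'.Connected ∧ T'.spanningCoe.IsAcyclic ∧ v ∈ T'.verts ∧
      ∀ e ∈ T'.edgeSet, P e := by
  by_cases hv : v ∈ T.verts
  · exact ⟨T, le_rfl, hT, hTa, hv, hTP⟩
  obtain ⟨hadj, hPpv⟩ := hpv hv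
  refine ⟨T ⊔ G.subgraphOfAdj hadj, le_sup_left, hT.sup_subgraphOfAdj hadj hp,
    isAcyclic_spanningCoe_sup_subgraphOfAdj hTa hadj hv, Or.inr (by simp), ?_⟩
  rw [edgeSet_sup, edgeSet_subgraphOfAdj]
  rintro e (he | rfl)
  exacts [hTP e he, hPpv]

end Subgraph

section Hub

variable [DecidableEq V] {a b c : V}

def hubColoring (a b c : V) (e : Sym2 V) : Fin 5 :=
  if e = s(a, b) then 3 else if e = s(a, c) then 4
  else if a ∈ e then 0 else if b ∈ e then 1 else 2

theorem exists_isTree_injOn_hubColoring (hab : G.Adj a b) (hac : G.Adj a c) (hbc : b ≠ c)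
    (hdom : ∀ v, v ≠ a → v ≠ b → v ≠ c → G.Adj a v ∧ G.Adj b v ∧ G.Adj c v) (x y z : V) :
    ∃ T : G.Subgraph, T.coe.IsTree ∧ {x, y, z} ⊆ T.verts ∧
      Set.InjOn (hubColoring a b c) T.edgeSet := by
  have hab' := hab.ne
  have hac' := hac.ne
  -- each colour class meets the tree in at most one edge, which `decode` recovers
  let decode : Fin 5 → Sym2 V := ![s(a, x), s(b, y), s(c, z), s(a, b), s(a, c)]
  let P : Sym2 V → Prop := fun e => decode (hubColoring a b c e) = e
  obtain ⟨T₁, h₀₁, hT₁, hT₁a, hb₁, hP₁⟩ :=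
    (Subgraph.singletonSubgraph_connected (G := G) (v := a)).exists_le_mem_verts (P := P)
      (isAcyclic_bot.anti fun _ _ h => h) (by simp [edgeSet_singletonSubgraph])
      (Set.mem_singleton a) (v := b) fun _ => ⟨hab, by simp [P, decode, hubColoring]⟩
  have ha₁ : a ∈ T₁.verts := h₀₁.1 rfl
  obtain ⟨T₂, h₁₂, hT₂, hT₂a, hc₂, hP₂⟩ := hT₁.exists_le_mem_verts hT₁a hP₁ ha₁ (v := c)
    fun _ => ⟨hac, by simp [P, decode, hubColoring, hab', hbc.symm]⟩
  have leg {T : G.Subgraph} (hT : T.Connected) (hTa : T.spanningCoe.IsAcyclic)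
      (hTP : ∀ e ∈ T.edgeSet, P e) (h₂ : T₂ ≤ T) {p v : V} (hp : p ∈ T₂.verts)
      (hpv : v ≠ a → v ≠ b → v ≠ c → G.Adj p v ∧ P s(p, v)) :
      ∃ T' : G.Subgraph, T ≤ T' ∧ T'.Connected ∧ T'.spanningCoe.IsAcyclic ∧ v ∈ T'.verts ∧
        ∀ e ∈ T'.edgeSet, P e :=
    hT.exists_le_mem_verts hTa hTP (h₂.1 hp) fun hv =>
      hpv (ne_of_mem_of_not_mem (h₂.1 (h₁₂.1 ha₁)) hv).symm
        (ne_of_mem_of_not_mem (h₂.1 (h₁₂.1 hb₁)) hv).symm (ne_of_mem_of_not_mem (h₂.1 hc₂) hv).symm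
  obtain ⟨T₃, h₂₃, hT₃, hT₃a, hx₃, hP₃⟩ := leg hT₂ hT₂a hP₂ le_rfl (h₁₂.1 ha₁) (v := x)
    fun hxa hxb hxc =>
      ⟨(hdom x hxa hxb hxc).1, by simp [P, decode, hubColoring, hxa, hxb, hxc]⟩
  obtain ⟨T₄, h₃₄, hT₄, hT₄a, hy₄, hP₄⟩ := leg hT₃ hT₃a hP₃ h₂₃ (h₁₂.1 hb₁) (v := y)
    fun hya hyb hyc => ⟨(hdom y hya hyb hyc).2.1,
      by simp [P, decode, hubColoring, hab', hab'.symm, hbc, hya, hya.symm, hyb]⟩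
  obtain ⟨T₅, h₄₅, hT₅, hT₅a, hz₅, hP₅⟩ := leg hT₄ hT₄a hP₄ (h₂₃.trans h₃₄) hc₂ (v := z)
    fun hza hzb hzc => ⟨(hdom z hza hzb hzc).2.2,
      by simp [P, decode, hubColoring, hac', hac'.symm, hbc, hza, hza.symm, hzb.symm, hzc]⟩
  refine ⟨T₅, hT₅.isTree_coe hT₅a, ?_, Set.LeftInvOn.injOn (f₁' := decode) hP₅⟩
  rintro v (rfl | rfl | rfl)
  exacts [(h₃₄.trans h₄₅).1 hx₃, h₄₅.1 hy₄, hz₅]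

end Hub

theorem rx_three_le_five_of_forall_adj {a b c : V} (hab : G.Adj a b) (hac : G.Adj a c)
    (hbc : b ≠ c) (hdom : ∀ v, v ≠ a → v ≠ b → v ≠ c → G.Adj a v ∧ G.Adj b v ∧ G.Adj c v) :
    G.rx 3 ≤ 5 := by
  classical
  refine rx_le_of_isKRainbowColoring (c := hubColoring a b c) fun S hS => ?_
  obtain ⟨x, y, z, -, -, -, rfl⟩ := Finset.card_eq_three.1 hS
  obtain ⟨T, hT, hxyz, hinj⟩ := exists_isTree_injOn_hubColoring hab hac hbc hdom x y z
  exact ⟨T, hT, by simpa using hxyz, hinj⟩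

theorem exists_adj_notMem_of_card_lt (v : V) {A : Finset V}
    (hA : A.card < (G.neighborSet v).ncard) : ∃ u, G.Adj v u ∧ u ∉ A := by
  by_contra! h
  exact hA.not_ge <| (Set.ncard_le_ncard (fun u hu => h u hu) A.finite_toSet).trans
    (Set.ncard_coe_finset A).le

theorem adj_of_forall_notMem_weight_le {w : V → ℝ} {t : ℝ}
    (hw : ∀ u v, u ≠ v → (G.Adj u v ↔ t ≤ w u + w v)) {A : Finset V} {x v : V}
    (hA : A.card < (G.neighborSet v).ncard) (hx : ∀ u ∉ A, w u ≤ w x) (hvx : v ≠ x) :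
    G.Adj v x := by
  obtain ⟨u, hvu, hu⟩ := exists_adj_notMem_of_card_lt v hA
  exact (hw v x hvx).2 <| ((hw v u hvu.ne).1 hvu).trans (by linarith [hx u hu])

end SimpleGraph

theorem stmt11_general {V : Type*} [Fintype V] (G : SimpleGraph V)
    (h4 : 4 ≤ Fintype.card V)
    (hthr : ∃ (w : V → ℝ) (t : ℝ), ∀ u v : V, u ≠ v → (G.Adj u v ↔ t ≤ w u + w v))
    (hδ : ∀ v : V, 3 ≤ (G.neighborSet v).ncard) :
    G.rx 3 ≤ 5 := by
  classical
  obtain ⟨w, t, hw⟩ := hthr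
  have heaviest (A : Finset V) (hA : A.card < 3) : ∃ x ∉ A, ∀ u ∉ A, w u ≤ w x :=
    Finset.exists_notMem_forall_notMem_le w (by omega)
  have adj {A : Finset V} (hA : A.card < 3) {x : V} (hx : ∀ u ∉ A, w u ≤ w x) {v : V}
      (hvx : v ≠ x) : G.Adj v x :=
    adj_of_forall_notMem_weight_le hw (hA.trans_le (hδ v)) hx hvx
  obtain ⟨a, -, ha⟩ := heaviest ∅ (by simp)
  obtain ⟨b, hb, hb'⟩ := heaviest {a} (by simp)
  have hab₃ : ({a, b} : Finset V).card < 3 := Finset.card_le_two.trans_lt (by norm_num)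
  obtain ⟨c, hc, hc'⟩ := heaviest {a, b} hab₃
  simp only [Finset.mem_singleton, Finset.mem_insert, not_or] at hb hc
  exact rx_three_le_five_of_forall_adj (adj (by simp) ha hb).symm (adj (by simp) ha hc.1).symm
    (Ne.symm hc.2) fun v hva hvb hvc =>
      ⟨(adj (by simp) ha hva).symm, (adj (by simp) hb' hvb).symm, (adj hab₃ hc' hvc).symm⟩

/-- Every connected threshold graph `G` with minimum degree at least 3 satisfies `rx₃(G) ≤ 5`. -/
theorem stmt11 {V : Type*} [Fintype V] (G : SimpleGraph V) (hG : G.Connected)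
    (h4 : 4 ≤ Fintype.card V)
    (hthr : ∃ (w : V → ℝ) (t : ℝ), ∀ u v : V, u ≠ v → (G.Adj u v ↔ t ≤ w u + w v))
    (hδ : ∀ v : V, 3 ≤ (G.neighborSet v).ncard) :
    G.rx 3 ≤ 5 :=
  stmt11_general G h4 hthr hδ
end

section
/- In a chain graph G = G(A,B) with minimum degree at least 3 and parts A = (a₁,…,a_k) ordered by neighborhood inclusion, the vertices a_{k−2}, a_{k−1}, a_k are each adjacent to all of B, and any three vertices b₁, b₂, b₃ ∈ N(a₁) are each adjacent to all of A; hence D = {a_{k−2}, a_{k−1}, a_k, b₁, b₂, b₃} is a connected 3-dominating set of G inducing a complete bipartite graph K_{3,3}. -/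
set_option maxHeartbeats 1000000


open SimpleGraph

/-- In a chain graph `G(A,B)` with minimum degree at least 3 and `A = (a₁, …, a_k)` ordered by
neighborhood inclusion, the last three `a`'s are adjacent to all of `B`, any three vertices
`b₁, b₂, b₃ ∈ N(a₁)` are adjacent to all of `A`, and together these six vertices form a
connected 3-dominating set inducing a `K_{3,3}`. -/
theorem stmt13 {V : Type*} [Fintype V] (G : SimpleGraph V) (hG : G.Connected)
    (A : Set V) (k : ℕ) (hk : 3 ≤ k) (a : Fin k → V) (ha : Function.Injective a)
    (hrange : Set.range a = A)
    (hbip : ∀ u v : V, G.Adj u v → (u ∈ A ↔ v ∉ A))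
    (hchain : ∀ i j : Fin k, i ≤ j → G.neighborSet (a i) ⊆ G.neighborSet (a j))
    (hδ : ∀ v : V, 3 ≤ (G.neighborSet v).ncard)
    (b₁ b₂ b₃ : V) (hb : b₁ ≠ b₂ ∧ b₁ ≠ b₃ ∧ b₂ ≠ b₃)
    (hbN : b₁ ∈ G.neighborSet (a ⟨0, by omega⟩) ∧ b₂ ∈ G.neighborSet (a ⟨0, by omega⟩) ∧
      b₃ ∈ G.neighborSet (a ⟨0, by omega⟩)) :
    (∀ j : Fin k, k - 3 ≤ (j : ℕ) → ∀ b ∉ A, G.Adj (a j) b) ∧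
    (∀ b ∈ ({b₁, b₂, b₃} : Set V), ∀ i : Fin k, G.Adj b (a i)) ∧
    (G.induce ({a ⟨k - 3, by omega⟩, a ⟨k - 2, by omega⟩, a ⟨k - 1, by omega⟩}
        ∪ {b₁, b₂, b₃})).Connected ∧
    (∀ v ∉ (({a ⟨k - 3, by omega⟩, a ⟨k - 2, by omega⟩, a ⟨k - 1, by omega⟩}
        ∪ {b₁, b₂, b₃}) : Set V),
      3 ≤ ((({a ⟨k - 3, by omega⟩, a ⟨k - 2, by omega⟩, a ⟨k - 1, by omega⟩}
        ∪ {b₁, b₂, b₃}) : Set V) ∩ G.neighborSet v).ncard) ∧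
    (∀ x ∈ ({a ⟨k - 3, by omega⟩, a ⟨k - 2, by omega⟩, a ⟨k - 1, by omega⟩} : Set V),
      ∀ y ∈ ({b₁, b₂, b₃} : Set V), G.Adj x y) ∧
    (({a ⟨k - 3, by omega⟩, a ⟨k - 2, by omega⟩, a ⟨k - 1, by omega⟩} : Set V).Pairwise
      fun x y => ¬ G.Adj x y) ∧
    (({b₁, b₂, b₃} : Set V).Pairwise fun x y => ¬ G.Adj x y) := by
  obtain ⟨hb12, hb13, hb23⟩ := hb
  obtain ⟨hbN1, hbN2, hbN3⟩ := hbN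
  have hA0 : a ⟨0, by omega⟩ ∈ A := hrange ▸ Set.mem_range_self _
  have hmemA : ∀ i : Fin k, a i ∈ A := fun i => hrange ▸ Set.mem_range_self _
  have hb1A : b₁ ∉ A := (hbip _ _ hbN1).mp hA0
  have hb2A : b₂ ∉ A := (hbip _ _ hbN2).mp hA0
  have hb3A : b₃ ∉ A := (hbip _ _ hbN3).mp hA0
  -- the b's are adjacent to all of A
  have hbadj : ∀ b ∈ ({b₁, b₂, b₃} : Set V), ∀ i : Fin k, G.Adj b (a i) := by
    intro b hbmem i
    have h0 : b ∈ G.neighborSet (a ⟨0, by omega⟩) := by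
      rcases hbmem with rfl | rfl | rfl <;> assumption
    exact ((hchain ⟨0, by omega⟩ i (by simp [Fin.le_def])) h0).symm
  -- key: the last three a's are adjacent to all of B
  have key : ∀ j : Fin k, k - 3 ≤ (j : ℕ) → ∀ b ∉ A, G.Adj (a j) b := by
    intro j hj b hbA
    obtain ⟨t, hts, htcard⟩ := Set.exists_subset_card_eq (n := 3) (hδ b)
    obtain ⟨x, y, z, hxy, hxz, hyz, rfl⟩ := Set.ncard_eq_three.mp htcard
    have hA' : ∀ w ∈ ({x, y, z} : Set V), ∃ i : Fin k, a i = w := by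
      intro w hw
      have hadj : G.Adj b w := hts hw
      have : w ∈ A := by
        by_contra hc
        exact hbA ((hbip b w hadj).mpr hc)
      rw [← hrange] at this
      exact this
    obtain ⟨i₁, hi₁⟩ := hA' x (by simp)
    obtain ⟨i₂, hi₂⟩ := hA' y (by simp)
    obtain ⟨i₃, hi₃⟩ := hA' z (by simp)
    have step : ∀ (i : Fin k) (w : V), (i : ℕ) ≤ k - 3 → a i = w →
        w ∈ ({x, y, z} : Set V) → G.Adj (a j) b := by
      intro i w hi hiw hw
      have hbv : b ∈ G.neighborSet (a i) := by
        rw [mem_neighborSet, hiw]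
        exact (hts hw).symm
      exact (hchain i j (by rw [Fin.le_def]; omega)) hbv
    have hne12 : (i₁ : ℕ) ≠ (i₂ : ℕ) := by
      intro h; exact hxy (by rw [← hi₁, ← hi₂]; congr 1; exact Fin.ext h)
    have hne13 : (i₁ : ℕ) ≠ (i₃ : ℕ) := by
      intro h; exact hxz (by rw [← hi₁, ← hi₃]; congr 1; exact Fin.ext h)
    have hne23 : (i₂ : ℕ) ≠ (i₃ : ℕ) := by
      intro h; exact hyz (by rw [← hi₂, ← hi₃]; congr 1; exact Fin.ext h)
    have h1 := i₁.isLt; have h2 := i₂.isLt; have h3 := i₃.isLt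
    have : (i₁ : ℕ) ≤ k - 3 ∨ (i₂ : ℕ) ≤ k - 3 ∨ (i₃ : ℕ) ≤ k - 3 := by omega
    rcases this with h | h | h
    · exact step i₁ x h hi₁ (by simp)
    · exact step i₂ y h hi₂ (by simp)
    · exact step i₃ z h hi₃ (by simp)
  -- distinctness of the last three a's
  have hane : ∀ m n : ℕ, (hm : m < k) → (hn : n < k) → m ≠ n →
      a ⟨m, hm⟩ ≠ a ⟨n, hn⟩ := by
    intro m n hm hn hmn h
    exact hmn (Fin.mk.injEq .. ▸ ha h)
  set j₁ : Fin k := ⟨k - 3, by omega⟩ with hj₁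
  set j₂ : Fin k := ⟨k - 2, by omega⟩ with hj₂
  set j₃ : Fin k := ⟨k - 1, by omega⟩ with hj₃
  set S : Set V := {a j₁, a j₂, a j₃} ∪ {b₁, b₂, b₃} with hS
  have hb1S : b₁ ∈ S := by simp [hS]
  have haS : ∀ m ∈ ({j₁, j₂, j₃} : Set (Fin k)), a m ∈ S := by
    intro m hm
    rcases hm with rfl | rfl | rfl <;> simp [hS]
  have hajb : ∀ m ∈ ({j₁, j₂, j₃} : Set (Fin k)), ∀ w ∈ ({b₁, b₂, b₃} : Set V),
      G.Adj (a m) w := by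
    intro m hm w hw
    exact (hbadj w hw m).symm
  refine ⟨key, hbadj, ?_, ?_, ?_, ?_, ?_⟩
  · -- connectedness of the induced graph
    have reach : ∀ x : ↥S, (G.induce S).Reachable x ⟨b₁, hb1S⟩ := by
      rintro ⟨x, hx⟩
      have hx' : x = b₁ ∨ x = b₂ ∨ x = b₃ ∨ x = a j₁ ∨ x = a j₂ ∨ x = a j₃ := by
        simpa [hS, Set.mem_union] using hx
      have hadjb1 : ∀ (w : V), (w = a j₁ ∨ w = a j₂ ∨ w = a j₃) → ∀ (h : w ∈ S),
          (G.induce S).Reachable ⟨w, h⟩ ⟨b₁, hb1S⟩ := by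
        intro w hw h
        have hadjw : G.Adj w b₁ := by
          rcases hw with h' | h' | h' <;>
            (rw [h']; exact (hbadj b₁ (by simp) _).symm)
        exact SimpleGraph.Adj.reachable (by simpa using hadjw)
      have hbj : ∀ (w : V), (w = b₂ ∨ w = b₃) → ∀ (h : w ∈ S),
          (G.induce S).Reachable ⟨w, h⟩ ⟨b₁, hb1S⟩ := by
        intro w hw h
        have hadjw : G.Adj w (a j₁) :=
          hbadj w (by rcases hw with h' | h' <;> simp [h']) j₁
        have h1 : (G.induce S).Adj ⟨w, h⟩ ⟨a j₁, haS j₁ (by simp)⟩ := by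
          simpa using hadjw
        exact h1.reachable.trans (hadjb1 (a j₁) (Or.inl rfl) _)
      rcases hx' with h | h | h | h | h | h
      · rw [show (⟨x, hx⟩ : ↥S) = ⟨b₁, hb1S⟩ from Subtype.ext h]
      · exact hbj x (Or.inl h) hx
      · exact hbj x (Or.inr h) hx
      · exact hadjb1 x (Or.inl h) hx
      · exact hadjb1 x (Or.inr (Or.inl h)) hx
      · exact hadjb1 x (Or.inr (Or.inr h)) hx
    haveI : Nonempty ↥S := ⟨⟨b₁, hb1S⟩⟩
    exact Connected.mk (fun x y => (reach x).trans (reach y).symm)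
  · -- 3-domination
    intro v hv
    by_cases hvA : v ∈ A
    · obtain ⟨i, rfl⟩ := hrange ▸ hvA
      have hsub : ({b₁, b₂, b₃} : Set V) ⊆ S ∩ G.neighborSet (a i) := by
        intro w hw
        exact ⟨Set.mem_union_right _ hw, (hbadj w hw i).symm⟩
      calc (3 : ℕ) = ({b₁, b₂, b₃} : Set V).ncard :=
            (Set.ncard_eq_three.mpr ⟨b₁, b₂, b₃, hb12, hb13, hb23, rfl⟩).symm
        _ ≤ _ := Set.ncard_le_ncard hsub (Set.toFinite _)
    · have hsub : ({a j₁, a j₂, a j₃} : Set V) ⊆ S ∩ G.neighborSet v := by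
        intro w hw
        refine ⟨Set.mem_union_left _ hw, ?_⟩
        rw [mem_neighborSet]
        rcases hw with rfl | rfl | rfl
        · exact (key j₁ (le_refl _) v hvA).symm.symm |>.symm.symm.symm
        · exact (key j₂ (by simp [hj₂]; omega) v hvA).symm.symm.symm
        · exact (key j₃ (by simp [hj₃]; omega) v hvA).symm.symm.symm
      calc (3 : ℕ) = ({a j₁, a j₂, a j₃} : Set V).ncard := by
            refine (Set.ncard_eq_three.mpr ⟨a j₁, a j₂, a j₃, ?_, ?_, ?_, rfl⟩).symm
            · exact hane _ _ _ _ (by omega)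
            · exact hane _ _ _ _ (by omega)
            · exact hane _ _ _ _ (by omega)
        _ ≤ _ := Set.ncard_le_ncard hsub (Set.toFinite _)
  · intro x hx y hy
    rcases hx with rfl | rfl | rfl <;> exact (hbadj y hy _).symm
  · intro x hx y hy hxy hadj
    have hxA : x ∈ A := by rcases hx with rfl | rfl | rfl <;> exact hmemA _
    have hyA : y ∈ A := by rcases hy with rfl | rfl | rfl <;> exact hmemA _
    exact ((hbip x y hadj).mp hxA) hyA
  · intro x hx y hy hxy hadj
    have hxA : x ∉ A := by rcases hx with rfl | rfl | rfl <;> assumption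
    have hyA : y ∉ A := by rcases hy with rfl | rfl | rfl <;> assumption
    exact hxA ((hbip x y hadj).mpr hyA)
end

section
/- Every connected chain graph G with minimum degree at least 3 satisfies rx₃(G) ≤ 6. -/
open SimpleGraph

/-
Since the neighbourhoods on each side of the chain graph are nested, a vertex with the smallest
neighbourhood on one side has all its neighbours adjacent to the whole side; three of them on
each side give a dominating `K₃,₃` with parts `a₀, a₁, a₂` and `b₀, b₁, b₂`. Colour the edge
`aᵢbⱼ` with `i + j (mod 3)` and every other edge at `aᵢ` or `bⱼ` with the pendant colour `i`
resp. `j`. Given three vertices `s₀, s₁, s₂`, attach each `sₖ` outside the core to the core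
vertex of index `k` on the other side. Some core vertex is alone on its side among these
anchors (or that side is empty), and the star from it to the anchors has distinct Latin colours;
together with the pendant edges, of distinct colours `k`, this is a rainbow connected subgraph,
and any spanning tree of it is a rainbow tree.
-/

theorem Sum.exists_forall_eq_or_isLeft_ne_of_fin_three {α β : Type*} [Nonempty α] [Nonempty β]
    (o : Fin 3 → α ⊕ β) : ∃ z, ∀ k, o k = z ∨ (o k).isLeft ≠ z.isLeft := by
  -- otherwise two indices point left and two others point right: four distinct elements of `Fin 3`
  by_contra! h
  obtain ⟨k₁, -, hk₁⟩ := h (.inl (Classical.arbitrary α))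
  obtain ⟨k₂, hk₂, hk₂'⟩ := h (o k₁)
  obtain ⟨l₁, -, hl₁⟩ := h (.inr (Classical.arbitrary β))
  obtain ⟨l₂, hl₂, hl₂'⟩ := h (o l₁)
  rw [Sum.isLeft_inl] at hk₁
  rw [Sum.isLeft_inr] at hl₁
  have hne : ∀ k l, (o k).isLeft = true → (o l).isLeft = false → k.val ≠ l.val :=
    fun k l hk hl h => by rw [Fin.ext h, hl] at hk; exact Bool.false_ne_true hk
  have := hne k₁ l₁ hk₁ hl₁
  have := hne k₁ l₂ hk₁ (hl₂'.trans hl₁)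
  have := hne k₂ l₁ (hk₂'.trans hk₁) hl₁
  have := hne k₂ l₂ (hk₂'.trans hk₁) (hl₂'.trans hl₁)
  have : k₂.val ≠ k₁.val := fun h => hk₂ (congrArg o (Fin.ext h))
  have : l₂.val ≠ l₁.val := fun h => hl₂ (congrArg o (Fin.ext h))
  omega

namespace SimpleGraph

variable {V ι : Type*} {G : SimpleGraph V}

theorem Subgraph.Connected.exists_isTree_le {H : G.Subgraph} (hH : H.Connected) :
    ∃ T ≤ H, T.verts = H.verts ∧ T.coe.IsTree := by
  obtain ⟨T₀, hT₀, hT₀tree⟩ := hH.coe.exists_isTree_le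
  let T : G.Subgraph :=
    { verts := H.verts
      Adj u v := ∃ (hu : u ∈ H.verts) (hv : v ∈ H.verts), T₀.Adj ⟨u, hu⟩ ⟨v, hv⟩
      adj_sub := fun ⟨_, _, h⟩ => H.adj_sub (hT₀ h)
      edge_vert := fun ⟨hu, _, _⟩ => hu
      symm := ⟨fun _ _ ⟨hu, hv, h⟩ => ⟨hv, hu, h.symm⟩⟩ }
  have hT : T.coe = T₀ := by
    ext ⟨u, hu⟩ ⟨v, hv⟩
    exact ⟨fun ⟨_, _, h⟩ => h, fun h => ⟨hu, hv, h⟩⟩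
  exact ⟨T, ⟨le_rfl, fun _ _ ⟨_, _, h⟩ => hT₀ h⟩, rfl, hT ▸ hT₀tree⟩

theorem rx_le_card_of_forall_exists_walk {α : Type*} [Fintype α] (c : Sym2 V → α) {k : ℕ}
    (h : ∀ S : Finset V, S.card = k → ∃ (u v : V) (p : G.Walk u v),
      (∀ w ∈ S, w ∈ p.support) ∧ Set.InjOn c p.edgeSet) :
    G.rx k ≤ Fintype.card α := by
  let e := Fintype.equivFin α
  refine Nat.sInf_le ⟨e ∘ c, fun S hS => ?_⟩
  obtain ⟨u, v, p, hSp, hc⟩ := h S hS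
  obtain ⟨T, hTp, hverts, hT⟩ := p.toSubgraph_connected.exists_isTree_le
  refine ⟨T, hT, fun w hw => hverts ▸ p.mem_verts_toSubgraph.2 (hSp w hw), ?_⟩
  exact e.injective.comp_injOn (hc.mono (p.edgeSet_toSubgraph ▸ Subgraph.edgeSet_mono hTp))

def HasNestedNeighborhoods (G : SimpleGraph V) (B : Set V) : Prop :=
  ∀ u ∈ B, ∀ v ∈ B, G.neighborSet u ⊆ G.neighborSet v ∨ G.neighborSet v ⊆ G.neighborSet u

namespace HasNestedNeighborhoods

variable {A B : Set V}

theorem compl (hbip : ∀ u v, G.Adj u v → (u ∈ A ↔ v ∉ A)) (hA : G.HasNestedNeighborhoods A) :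
    G.HasNestedNeighborhoods Aᶜ := by
  intro u hu v hv
  by_contra! hne
  obtain ⟨w, hwu, hwv⟩ := Set.not_subset.1 hne.1
  obtain ⟨w', hw'v, hw'u⟩ := Set.not_subset.1 hne.2
  rcases hA w ((hbip w u hwu.symm).2 hu) w' ((hbip w' v hw'v.symm).2 hv) with h | h
  · exact hw'u (h hwu.symm).symm
  · exact hwv (h hw'v.symm).symm

theorem exists_forall_neighborSet_subset [Finite V] (hB : G.HasNestedNeighborhoods B)
    (hne : B.Nonempty) : ∃ w₀ ∈ B, ∀ w ∈ B, G.neighborSet w₀ ⊆ G.neighborSet w := by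
  obtain ⟨w₀, hw₀, hmin⟩ := B.toFinite.exists_minimalFor G.neighborSet B hne
  exact ⟨w₀, hw₀, fun w hw => (hB w₀ hw₀ w hw).elim id (hmin hw)⟩

theorem exists_injective_forall_adj [Finite V] {n : ℕ} (hB : G.HasNestedNeighborhoods B)
    (hne : B.Nonempty) (hδ : ∀ w ∈ B, n ≤ (G.neighborSet w).ncard) :
    ∃ f : Fin n → V, Function.Injective f ∧ ∀ i, ∀ w ∈ B, G.Adj w (f i) := by
  obtain ⟨w₀, hw₀, hmin⟩ := hB.exists_forall_neighborSet_subset hne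
  have := Fintype.ofFinite (G.neighborSet w₀)
  obtain ⟨f⟩ := Function.Embedding.nonempty_of_card_le (α := Fin n) (β := G.neighborSet w₀)
    (by rw [Fintype.card_fin, ← Nat.card_eq_fintype_card, Nat.card_coe_set_eq]; exact hδ w₀ hw₀)
  exact ⟨fun i => f i, Subtype.val_injective.comp f.injective, fun i w hw => hmin w hw (f i).2⟩

end HasNestedNeighborhoods

open Classical in
noncomputable def edgeIndex (f : ι → V) (e : Sym2 V) : Option ι :=
  if h : ∃ i, f i ∈ e then some h.choose else none

theorem edgeIndex_eq_some {f : ι → V} {e : Sym2 V} {i : ι} (hi : f i ∈ e)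
    (huniq : ∀ j, f j ∈ e → j = i) : edgeIndex f e = some i := by
  have h : ∃ j, f j ∈ e := ⟨i, hi⟩
  rw [edgeIndex, dif_pos h, huniq _ h.choose_spec]

theorem edgeIndex_eq_none {f : ι → V} {e : Sym2 V} (h : ∀ i, f i ∉ e) : edgeIndex f e = none :=
  dif_neg (not_exists.2 h)

noncomputable def latinColoring [Zero ι] [Add ι] (a b : ι → V) (e : Sym2 V) : ι ⊕ ι :=
  match edgeIndex a e, edgeIndex b e with
  | some i, some j => .inl (i + j)
  | some i, none => .inr i
  | none, some j => .inr j
  | none, none => .inl 0 -- never used: the rainbow trees only contain edges at the core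

structure IsDominatingBiclique (G : SimpleGraph V) (A : Set V) (a b : ι → V) : Prop where
  injective_left : Function.Injective a
  injective_right : Function.Injective b
  left_mem : ∀ i, a i ∈ A
  right_not_mem : ∀ j, b j ∉ A
  adj_left : ∀ i, ∀ v ∉ A, G.Adj (a i) v
  adj_right : ∀ j, ∀ u ∈ A, G.Adj (b j) u

namespace IsDominatingBiclique

variable {A : Set V}

section

variable {a b : ι → V}

-- Core vertices are indexed by `ι ⊕ ι` via `Sum.elim a b`; `Sum.elim id id` forgets the side.

theorem left_ne_right (hD : G.IsDominatingBiclique A a b) (i j : ι) : a i ≠ b j :=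
  fun h => hD.right_not_mem j (h ▸ hD.left_mem i)

theorem adj_sumElim (hD : G.IsDominatingBiclique A a b) {z w : ι ⊕ ι}
    (h : z.isLeft ≠ w.isLeft) :
    G.Adj (Sum.elim a b z) (Sum.elim a b w) := by
  cases z <;> cases w <;>
    simp only [Sum.isLeft_inl, Sum.isLeft_inr, ne_eq, not_true_eq_false] at h
  · exact hD.adj_left _ _ (hD.right_not_mem _)
  · exact hD.adj_right _ _ (hD.left_mem _)

theorem exists_anchor (hD : G.IsDominatingBiclique A a b) (v : V) (k : ι) :
    ∃ w : ι ⊕ ι, Sum.elim a b w = v ∨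
      (v ∉ Set.range (Sum.elim a b) ∧ Sum.elim id id w = k ∧ G.Adj (Sum.elim a b w) v) := by
  by_cases hv : v ∈ Set.range (Sum.elim a b)
  · obtain ⟨w, rfl⟩ := hv
    exact ⟨w, Or.inl rfl⟩
  by_cases hA : v ∈ A
  · exact ⟨.inr k, Or.inr ⟨hv, rfl, hD.adj_right k v hA⟩⟩
  · exact ⟨.inl k, Or.inr ⟨hv, rfl, hD.adj_left k v hA⟩⟩

theorem exists_walk_through_anchor (hD : G.IsDominatingBiclique A a b) {r w : ι ⊕ ι} {v : V}
    {k : ι} (hr : w = r ∨ w.isLeft ≠ r.isLeft)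
    (hw : Sum.elim a b w = v ∨ (v ∉ Set.range (Sum.elim a b) ∧ Sum.elim id id w = k ∧
      G.Adj (Sum.elim a b w) v)) :
    ∃ p : G.Walk (Sum.elim a b r) v, ∀ e ∈ p.edges,
      (e = s(Sum.elim a b r, Sum.elim a b w) ∧ r.isLeft ≠ w.isLeft) ∨
      (e = s(Sum.elim a b w, v) ∧ v ∉ Set.range (Sum.elim a b) ∧ Sum.elim id id w = k) := by
  obtain ⟨p, hp⟩ : ∃ p : G.Walk (Sum.elim a b r) (Sum.elim a b w), ∀ e ∈ p.edges,
      e = s(Sum.elim a b r, Sum.elim a b w) ∧ r.isLeft ≠ w.isLeft := by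
    rcases hr with rfl | hr
    · exact ⟨.nil, by simp⟩
    · exact ⟨(hD.adj_sumElim hr.symm).toWalk, fun e he => ⟨by simpa using he, hr.symm⟩⟩
  obtain ⟨q, hq⟩ : ∃ q : G.Walk (Sum.elim a b w) v, ∀ e ∈ q.edges,
      e = s(Sum.elim a b w, v) ∧ v ∉ Set.range (Sum.elim a b) ∧ Sum.elim id id w = k := by
    rcases hw with rfl | ⟨hv, hk, hadj⟩
    · exact ⟨.nil, by simp⟩
    · exact ⟨hadj.toWalk, fun e he => ⟨by simpa using he, hv, hk⟩⟩
  refine ⟨p.append q, fun e he => ?_⟩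
  rw [Walk.edges_append, List.mem_append] at he
  exact he.imp (hp e) (hq e)

variable [AddCommGroup ι]

theorem latinColoring_left_right (hD : G.IsDominatingBiclique A a b) (i j : ι) :
    latinColoring a b s(a i, b j) = .inl (i + j) := by
  have ha : ∀ i', a i' ∈ s(a i, b j) → i' = i := by
    intro i' h
    rcases Sym2.mem_iff.1 h with h | h
    exacts [hD.injective_left h, absurd h (hD.left_ne_right _ _)]
  have hb : ∀ j', b j' ∈ s(a i, b j) → j' = j := by
    intro j' h
    rcases Sym2.mem_iff.1 h with h | h
    exacts [absurd h.symm (hD.left_ne_right _ _), hD.injective_right h]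
  rw [latinColoring, edgeIndex_eq_some (Sym2.mem_mk_left _ _) ha,
    edgeIndex_eq_some (Sym2.mem_mk_right _ _) hb]

theorem latinColoring_sumElim (hD : G.IsDominatingBiclique A a b) {z w : ι ⊕ ι}
    (h : z.isLeft ≠ w.isLeft) : latinColoring a b s(Sum.elim a b z, Sum.elim a b w) =
      .inl (Sum.elim id id z + Sum.elim id id w) := by
  cases z <;> cases w <;>
    simp only [Sum.isLeft_inl, Sum.isLeft_inr, ne_eq, not_true_eq_false] at h
  · exact hD.latinColoring_left_right _ _
  · rw [Sym2.eq_swap]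
    exact (hD.latinColoring_left_right _ _).trans (congrArg _ (add_comm _ _))

theorem latinColoring_sumElim_of_notMem_range (hD : G.IsDominatingBiclique A a b) {z : ι ⊕ ι}
    {v : V} (hv : v ∉ Set.range (Sum.elim a b)) :
    latinColoring a b s(Sum.elim a b z, v) = .inr (Sum.elim id id z) := by
  have hva : ∀ i, a i ≠ v := fun i h => hv ⟨.inl i, h⟩
  have hvb : ∀ j, b j ≠ v := fun j h => hv ⟨.inr j, h⟩
  cases z with
  | inl i =>
    simp only [Sum.elim_inl, id_eq]
    rw [latinColoring, edgeIndex_eq_some (Sym2.mem_mk_left _ _), edgeIndex_eq_none]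
    · intro j h
      rcases Sym2.mem_iff.1 h with h | h
      exacts [hD.left_ne_right _ _ h.symm, hvb j h]
    · intro i' h
      rcases Sym2.mem_iff.1 h with h | h
      exacts [hD.injective_left h, absurd h (hva i')]
  | inr j =>
    simp only [Sum.elim_inr, id_eq]
    rw [latinColoring, edgeIndex_eq_none, edgeIndex_eq_some (Sym2.mem_mk_left _ _)]
    · intro j' h
      rcases Sym2.mem_iff.1 h with h | h
      exacts [hD.injective_right h, absurd h (hvb j')]
    · intro i h
      rcases Sym2.mem_iff.1 h with h | h
      exacts [hD.left_ne_right _ _ h, hva i h]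

theorem injOn_latinColoring (hD : G.IsDominatingBiclique A a b) (r : ι ⊕ ι)
    (o : ι → ι ⊕ ι) (s : ι → V) :
    Set.InjOn (latinColoring a b) {e | ∃ k,
      (e = s(Sum.elim a b r, Sum.elim a b (o k)) ∧ r.isLeft ≠ (o k).isLeft) ∨
      (e = s(Sum.elim a b (o k), s k) ∧ s k ∉ Set.range (Sum.elim a b) ∧
        Sum.elim id id (o k) = k)} := by
  rintro _ ⟨k, ⟨rfl, hk⟩ | ⟨rfl, hk, hok⟩⟩ _ ⟨l, ⟨rfl, hl⟩ | ⟨rfl, hl, hol⟩⟩ heq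
  · rw [hD.latinColoring_sumElim hk, hD.latinColoring_sumElim hl, Sum.inl.injEq,
      add_right_inj] at heq
    have hside : (o k).isLeft = (o l).isLeft := by grind
    have : o k = o l := by
      cases h : o k <;> cases h' : o l <;> simp_all
    rw [this]
  · rw [hD.latinColoring_sumElim hk, hD.latinColoring_sumElim_of_notMem_range hl] at heq
    exact (Sum.inl_ne_inr heq).elim
  · rw [hD.latinColoring_sumElim_of_notMem_range hk, hD.latinColoring_sumElim hl] at heq
    exact (Sum.inr_ne_inl heq).elim
  · rw [hD.latinColoring_sumElim_of_notMem_range hk, hD.latinColoring_sumElim_of_notMem_range hl,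
      Sum.inr.injEq, hok, hol] at heq
    rw [heq]

end

variable {a b : Fin 3 → V}

theorem exists_walk_injOn_latinColoring (hD : G.IsDominatingBiclique A a b) (s : Fin 3 → V) :
    ∃ p : G.Walk (s 0) (s 2), (∀ k, s k ∈ p.support) ∧
      Set.InjOn (latinColoring a b) p.edgeSet := by
  choose o ho using fun k => hD.exists_anchor (s k) k
  obtain ⟨r, hr⟩ := Sum.exists_forall_eq_or_isLeft_ne_of_fin_three o
  choose W hW using fun k => hD.exists_walk_through_anchor (hr k) (ho k)
  refine ⟨(W 0).reverse.append ((W 1).append ((W 1).reverse.append (W 2))), fun k => ?_,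
    (hD.injOn_latinColoring r o s).mono fun e he => ?_⟩
  · fin_cases k <;> simp [Walk.mem_support_append_iff]
  · simp only [Walk.edgeSet, Walk.edges_append, Walk.edges_reverse, Set.mem_ofPred_eq,
      List.mem_append, List.mem_reverse] at he
    rcases he with he | he | he | he
    exacts [⟨0, hW 0 e he⟩, ⟨1, hW 1 e he⟩, ⟨1, hW 1 e he⟩, ⟨2, hW 2 e he⟩]

theorem rx_three_le (hD : G.IsDominatingBiclique A a b) : G.rx 3 ≤ 6 := by
  classical
  refine (rx_le_card_of_forall_exists_walk (latinColoring a b) fun S hS => ?_).trans (by simp)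
  obtain ⟨x, y, z, -, -, -, rfl⟩ := Finset.card_eq_three.1 hS
  obtain ⟨p, hp, hc⟩ := hD.exists_walk_injOn_latinColoring ![x, y, z]
  refine ⟨_, _, p, fun w hw => ?_, hc⟩
  simp only [Finset.mem_insert, Finset.mem_singleton] at hw
  rcases hw with rfl | rfl | rfl
  exacts [hp 0, hp 1, hp 2]

end IsDominatingBiclique

end SimpleGraph

/-- Every connected chain graph `G` with minimum degree at least 3 satisfies `rx₃(G) ≤ 6`. -/
theorem stmt14 {V : Type*} [Fintype V] (G : SimpleGraph V) (hG : G.Connected)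
    (hchain : ∃ A : Set V, (∀ u v : V, G.Adj u v → (u ∈ A ↔ v ∉ A)) ∧
      ∀ u ∈ A, ∀ v ∈ A,
        G.neighborSet u ⊆ G.neighborSet v ∨ G.neighborSet v ⊆ G.neighborSet u)
    (hδ : ∀ v : V, 3 ≤ (G.neighborSet v).ncard) :
    G.rx 3 ≤ 6 := by
  obtain ⟨A, hbip, hA : G.HasNestedNeighborhoods A⟩ := hchain
  obtain ⟨v₀⟩ := hG.nonempty
  obtain ⟨u₀, hu₀⟩ := Set.nonempty_of_ncard_ne_zero (s := G.neighborSet v₀) (by linarith [hδ v₀])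
  obtain ⟨⟨w, hw⟩, ⟨w', hw'⟩⟩ : A.Nonempty ∧ Aᶜ.Nonempty := by
    by_cases h : v₀ ∈ A
    · exact ⟨⟨v₀, h⟩, ⟨u₀, (hbip v₀ u₀ hu₀).1 h⟩⟩
    · exact ⟨⟨u₀, by simpa [h] using hbip v₀ u₀ hu₀⟩, ⟨v₀, h⟩⟩
  obtain ⟨a, ha, hadj_a⟩ := (HasNestedNeighborhoods.compl hbip hA).exists_injective_forall_adj
    ⟨w', hw'⟩ fun v _ => hδ v
  obtain ⟨b, hb, hadj_b⟩ := hA.exists_injective_forall_adj ⟨w, hw⟩ fun v _ => hδ v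
  exact IsDominatingBiclique.rx_three_le (A := A)
    { injective_left := ha
      injective_right := hb
      left_mem := fun i => (hbip _ _ (hadj_a i w' hw').symm).2 hw'
      right_not_mem := fun j h => (hbip _ _ (hadj_b j w hw).symm).1 h hw
      adj_left := fun i v hv => (hadj_a i v hv).symm
      adj_right := fun j u hu => (hadj_b j u hu).symm }
end

section
/- Let c be an edge-coloring of a graph G, let u, v, w be three vertices, and suppose each x ∈ {u,v,w} has three internally disjoint rainbow paths P₁ˣ, P₂ˣ, P₃ˣ from x to a set D with pairwise disjoint color sets (i.e., P₁ˣ ∪ P₂ˣ ∪ P₃ˣ is rainbow), where each P₁ˣ has exactly one edge. Then there exist i, j, k ∈ {1,2,3} with P_iᵘ ∪ P_jᵛ ∪ P_kʷ rainbow if and only if either (C1) the colors c(P₁ᵘ), c(P₁ᵛ), c(P₁ʷ) are not all equal, or (C2) there exist distinct x, y ∈ {u,v,w} and s, t ∈ {2,3} with c(P_sˣ) ∩ c(P_tʸ) = ∅. -/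
/-!
Only the colour lists of the paths matter. Since `P₁ˣ` is a single edge, in any selection
`(i, j, k)` two of the three indices are both `1` or both in `{2, 3}`. If the three single edges
share one colour and no two later paths of different systems are colour-disjoint, such a pair
shares a colour, so no selection is rainbow. Conversely, if two single edges have distinct colours
`a ≠ b`, at most two of the three pairwise colour-disjoint paths of the remaining system meet
`{a, b}`; and if `P_sˣ, P_tʸ` are colour-disjoint, the single edge of the third system completes
them, because its colour, common to all three single edges, lies on no later path of `x` or `y`.
-/

/-- A family of walks has a rainbow union if, collecting the edges of all of them, the edges
are pairwise distinct and receive pairwise distinct colors. -/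
def RainbowUnion {V : Type*} (c : Sym2 V → ℕ) (es : List (Sym2 V)) : Prop :=
  (es.map c).Nodup

section ColourLists

open Function

variable {α : Type*}

theorem nodup_append_append_iff {X Y Z : List α} :
    (X ++ Y ++ Z).Nodup ↔
      X.Nodup ∧ Y.Nodup ∧ Z.Nodup ∧ X.Disjoint Y ∧ X.Disjoint Z ∧ Y.Disjoint Z := by
  simp only [List.nodup_append', List.disjoint_append_left]
  tauto

theorem nodup_append_append_rotate {X Y Z : List α} :
    (X ++ Y ++ Z).Nodup ↔ (Y ++ Z ++ X).Nodup := by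
  rw [List.append_assoc, List.nodup_append_comm]

theorem nodup_flatten_ofFn_iff {n : ℕ} {A : Fin n → List α} :
    (List.ofFn A).flatten.Nodup ↔ (∀ i, (A i).Nodup) ∧ Pairwise (List.Disjoint on A) := by
  rw [List.nodup_flatten, List.pairwise_ofFn]
  refine and_congr (by simp) ⟨fun h i j hij => ?_, fun h i j hij => h hij.ne⟩
  rcases hij.lt_or_gt with hij | hij
  · exact h hij
  · exact (h hij).symm

theorem exists_forall_mem_imp_eq_of_pairwise_disjoint {ι : Type*} [Nonempty ι]
    {C : ι → List α} (hC : Pairwise (List.Disjoint on C)) (a : α) :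
    ∃ i, ∀ k, a ∈ C k → k = i := by
  by_cases h : ∃ i, a ∈ C i
  · obtain ⟨i, hi⟩ := h
    exact ⟨i, fun k hk => by_contra fun hki => hC hki hk hi⟩
  · exact ⟨Classical.arbitrary ι, fun k hk => (h ⟨k, hk⟩).elim⟩

theorem exists_notMem_notMem_of_pairwise_disjoint {C : Fin 3 → List α}
    (hC : Pairwise (List.Disjoint on C)) (a b : α) : ∃ k, a ∉ C k ∧ b ∉ C k := by
  obtain ⟨i, hi⟩ := exists_forall_mem_imp_eq_of_pairwise_disjoint hC a
  obtain ⟨j, hj⟩ := exists_forall_mem_imp_eq_of_pairwise_disjoint hC b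
  have avoid : ∀ i j : Fin 3, ∃ k, k ≠ i ∧ k ≠ j := by decide
  obtain ⟨k, hki, hkj⟩ := avoid i j
  exact ⟨k, fun h => hki (hi k h), fun h => hkj (hj k h)⟩

/-- The colour lists `A i = c(P_{i+1}ˣ)` of a rainbow system of three paths whose first path is
a single edge of colour `a`. -/
structure IsRainbowSystem (A : Fin 3 → List α) (a : α) : Prop where
  head : A 0 = [a]
  nodup : ∀ i, (A i).Nodup
  disjoint : Pairwise (List.Disjoint on A)

namespace IsRainbowSystem

variable {A B C : Fin 3 → List α} {a b d : α}

theorem of_nodup_append_append (head : A 0 = [a]) (h : (A 0 ++ A 1 ++ A 2).Nodup) :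
    IsRainbowSystem A a := by
  have h' : (List.ofFn A).flatten.Nodup := by simpa [List.ofFn_succ] using h
  obtain ⟨nodup, disjoint⟩ := nodup_flatten_ofFn_iff.mp h'
  exact ⟨head, nodup, disjoint⟩

theorem notMem (hA : IsRainbowSystem A a) {s : Fin 3} (hs : s ≠ 0) : a ∉ A s :=
  hA.disjoint hs.symm (by simp [hA.head])

theorem head_eq_head_iff (hA : IsRainbowSystem A a) (hB : IsRainbowSystem B b) :
    A 0 = B 0 ↔ a = b := by
  rw [hA.head, hB.head, List.singleton_inj]

theorem exists_nodup_singleton_append_singleton_append (hC : IsRainbowSystem C d) (hab : a ≠ b) :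
    ∃ k, ([a] ++ [b] ++ C k).Nodup := by
  obtain ⟨k, ha, hb⟩ := exists_notMem_notMem_of_pairwise_disjoint hC.disjoint a b
  exact ⟨k, by simp [hab, ha, hb, hC.nodup k]⟩

theorem not_disjoint_of_eq_zero_iff (hA : IsRainbowSystem A a) (hB : IsRainbowSystem B a)
    (hAB : ∀ s t : Fin 3, s ≠ 0 → t ≠ 0 → ¬ (A s).Disjoint (B t)) {i j : Fin 3}
    (hij : i = 0 ↔ j = 0) : ¬ (A i).Disjoint (B j) := by
  by_cases hi : i = 0
  · simp [hi, hij.mp hi, hA.head, hB.head]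
  · exact hAB i j hi (mt hij.mpr hi)

theorem heads_ne_or_disjoint_of_exists_nodup (hA : IsRainbowSystem A a)
    (hB : IsRainbowSystem B b) (hC : IsRainbowSystem C d)
    (h : ∃ i j k : Fin 3, (A i ++ B j ++ C k).Nodup) :
    ¬ (A 0 = B 0 ∧ B 0 = C 0) ∨
      ∃ s t : Fin 3, s ≠ 0 ∧ t ≠ 0 ∧
        ((A s).Disjoint (B t) ∨ (A s).Disjoint (C t) ∨ (B s).Disjoint (C t)) := by
  obtain ⟨i, j, k, h⟩ := h
  obtain ⟨-, -, -, hij, hik, hjk⟩ := nodup_append_append_iff.mp h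
  by_contra! hcon
  obtain ⟨⟨hAB, hBC⟩, hlater⟩ := hcon
  obtain rfl := (hA.head_eq_head_iff hB).mp hAB
  obtain rfl := (hB.head_eq_head_iff hC).mp hBC
  obtain h | h | h : (i = 0 ↔ j = 0) ∨ (i = 0 ↔ k = 0) ∨ (j = 0 ↔ k = 0) := by tauto
  · exact not_disjoint_of_eq_zero_iff hA hB (fun s t hs ht => (hlater s t hs ht).1) h hij
  · exact not_disjoint_of_eq_zero_iff hA hC (fun s t hs ht => (hlater s t hs ht).2.1) h hik
  · exact not_disjoint_of_eq_zero_iff hB hC (fun s t hs ht => (hlater s t hs ht).2.2) h hjk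

theorem exists_nodup_of_heads_ne (hA : IsRainbowSystem A a) (hB : IsRainbowSystem B b)
    (hC : IsRainbowSystem C d) (h : ¬ (A 0 = B 0 ∧ B 0 = C 0)) :
    ∃ i j k : Fin 3, (A i ++ B j ++ C k).Nodup := by
  rcases not_and_or.mp h with hab | hbd
  · obtain ⟨k, hk⟩ :=
      hC.exists_nodup_singleton_append_singleton_append ((hA.head_eq_head_iff hB).not.mp hab)
    exact ⟨0, 0, k, by rwa [hA.head, hB.head]⟩
  · obtain ⟨i, hi⟩ :=
      hA.exists_nodup_singleton_append_singleton_append ((hB.head_eq_head_iff hC).not.mp hbd)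
    exact ⟨i, 0, 0, by rwa [hB.head, hC.head, nodup_append_append_rotate]⟩

theorem exists_nodup_of_disjoint (hA : IsRainbowSystem A a) (hB : IsRainbowSystem B a)
    (hC : IsRainbowSystem C a)
    (h : ∃ s t : Fin 3, s ≠ 0 ∧ t ≠ 0 ∧
      ((A s).Disjoint (B t) ∨ (A s).Disjoint (C t) ∨ (B s).Disjoint (C t))) :
    ∃ i j k : Fin 3, (A i ++ B j ++ C k).Nodup := by
  have complete : ∀ {X Y : List α}, X.Nodup → Y.Nodup → X.Disjoint Y → a ∉ X → a ∉ Y →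
      (X ++ Y ++ [a]).Nodup := fun hX hY hXY haX haY =>
    nodup_append_append_iff.mpr ⟨hX, hY, List.nodup_singleton a, hXY,
      List.disjoint_singleton.mpr haX, List.disjoint_singleton.mpr haY⟩
  obtain ⟨s, t, hs, ht, hst | hst | hst⟩ := h
  · refine ⟨s, t, 0, ?_⟩
    rw [hC.head]
    exact complete (hA.nodup s) (hB.nodup t) hst (hA.notMem hs) (hB.notMem ht)
  · refine ⟨s, 0, t, ?_⟩
    rw [hB.head, nodup_append_append_rotate, nodup_append_append_rotate]
    exact complete (hC.nodup t) (hA.nodup s) hst.symm (hC.notMem ht) (hA.notMem hs)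
  · refine ⟨0, s, t, ?_⟩
    rw [hA.head, nodup_append_append_rotate]
    exact complete (hB.nodup s) (hC.nodup t) hst (hB.notMem hs) (hC.notMem ht)

theorem exists_nodup_iff (hA : IsRainbowSystem A a) (hB : IsRainbowSystem B b)
    (hC : IsRainbowSystem C d) :
    (∃ i j k : Fin 3, (A i ++ B j ++ C k).Nodup) ↔
      ¬ (A 0 = B 0 ∧ B 0 = C 0) ∨
        ∃ s t : Fin 3, s ≠ 0 ∧ t ≠ 0 ∧
          ((A s).Disjoint (B t) ∨ (A s).Disjoint (C t) ∨ (B s).Disjoint (C t)) := by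
  refine ⟨heads_ne_or_disjoint_of_exists_nodup hA hB hC, fun h => ?_⟩
  by_cases heads : A 0 = B 0 ∧ B 0 = C 0
  · obtain rfl := (hA.head_eq_head_iff hB).mp heads.1
    obtain rfl := (hB.head_eq_head_iff hC).mp heads.2
    exact exists_nodup_of_disjoint hA hB hC (h.resolve_left (not_not.mpr heads))
  · exact exists_nodup_of_heads_ne hA hB hC heads

end IsRainbowSystem

end ColourLists

theorem SimpleGraph.Walk.exists_isRainbowSystem {V : Type*} {G : SimpleGraph V}
    (c : Sym2 V → ℕ) {x : V} {dx : Fin 3 → V} (P : ∀ i, G.Walk x (dx i))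
    (hl : (P 0).length = 1) (hr : RainbowUnion c ((P 0).edges ++ (P 1).edges ++ (P 2).edges)) :
    ∃ a, IsRainbowSystem (fun i => (P i).edges.map c) a := by
  obtain ⟨a, ha⟩ := List.length_eq_one_iff.mp (show ((P 0).edges.map c).length = 1 by simp [hl])
  exact ⟨a, .of_nodup_append_append ha (by simpa [RainbowUnion] using hr)⟩

theorem stmt19_general {V : Type*} (G : SimpleGraph V) (c : Sym2 V → ℕ)
    (u v w : V)
    (du dv dw : Fin 3 → V)
    (Pu : ∀ i : Fin 3, G.Walk u (du i))
    (Pv : ∀ i : Fin 3, G.Walk v (dv i))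
    (Pw : ∀ i : Fin 3, G.Walk w (dw i))
    -- each `P₁ˣ` consists of exactly one edge
    (hlu : (Pu 0).length = 1) (hlv : (Pv 0).length = 1) (hlw : (Pw 0).length = 1)
    -- each system `P₁ˣ ∪ P₂ˣ ∪ P₃ˣ` is rainbow
    (hru : RainbowUnion c ((Pu 0).edges ++ (Pu 1).edges ++ (Pu 2).edges))
    (hrv : RainbowUnion c ((Pv 0).edges ++ (Pv 1).edges ++ (Pv 2).edges))
    (hrw : RainbowUnion c ((Pw 0).edges ++ (Pw 1).edges ++ (Pw 2).edges)) :
    (∃ i j k : Fin 3,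
        RainbowUnion c ((Pu i).edges ++ (Pv j).edges ++ (Pw k).edges)) ↔
      (¬ ((Pu 0).edges.map c = (Pv 0).edges.map c ∧
          (Pv 0).edges.map c = (Pw 0).edges.map c)) ∨
      (∃ s t : Fin 3, s ≠ 0 ∧ t ≠ 0 ∧
        (List.Disjoint ((Pu s).edges.map c) ((Pv t).edges.map c) ∨
         List.Disjoint ((Pu s).edges.map c) ((Pw t).edges.map c) ∨
         List.Disjoint ((Pv s).edges.map c) ((Pw t).edges.map c))) := by
  obtain ⟨a, hA⟩ := SimpleGraph.Walk.exists_isRainbowSystem c Pu hlu hru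
  obtain ⟨b, hB⟩ := SimpleGraph.Walk.exists_isRainbowSystem c Pv hlv hrv
  obtain ⟨d, hC⟩ := SimpleGraph.Walk.exists_isRainbowSystem c Pw hlw hrw
  simpa [RainbowUnion] using hA.exists_nodup_iff hB hC

/-- Criterion for picking one rainbow path out of each of three systems of three internally
disjoint super-rainbow paths `P₁ˣ, P₂ˣ, P₃ˣ` from `x ∈ {u,v,w}` to `D` (with `P₁ˣ` a single
edge) so that the union of the three chosen paths is rainbow: this is possible iff (C1) the
colors of the single edges `P₁ᵘ, P₁ᵛ, P₁ʷ` are not all equal, or (C2) two paths `P_sˣ, P_tʸ`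
with `s,t ∈ {2,3}` from distinct systems have disjoint color sets. -/
theorem stmt19 {V : Type*} [DecidableEq V] (G : SimpleGraph V) (c : Sym2 V → ℕ)
    (D : Set V) (u v w : V)
    (du dv dw : Fin 3 → V)
    (hdu : ∀ i, du i ∈ D) (hdv : ∀ i, dv i ∈ D) (hdw : ∀ i, dw i ∈ D)
    (Pu : ∀ i : Fin 3, G.Walk u (du i))
    (Pv : ∀ i : Fin 3, G.Walk v (dv i))
    (Pw : ∀ i : Fin 3, G.Walk w (dw i))
    (hpu : ∀ i, (Pu i).IsPath) (hpv : ∀ i, (Pv i).IsPath) (hpw : ∀ i, (Pw i).IsPath)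
    -- the three paths from each vertex are internally disjoint: they meet only in that vertex
    (hiu : ∀ i j : Fin 3, i ≠ j →
      {x | x ∈ (Pu i).support} ∩ {x | x ∈ (Pu j).support} = {u})
    (hiv : ∀ i j : Fin 3, i ≠ j →
      {x | x ∈ (Pv i).support} ∩ {x | x ∈ (Pv j).support} = {v})
    (hiw : ∀ i j : Fin 3, i ≠ j →
      {x | x ∈ (Pw i).support} ∩ {x | x ∈ (Pw j).support} = {w})
    -- each `P₁ˣ` consists of exactly one edge
    (hlu : (Pu 0).length = 1) (hlv : (Pv 0).length = 1) (hlw : (Pw 0).length = 1)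
    -- each system `P₁ˣ ∪ P₂ˣ ∪ P₃ˣ` is rainbow
    (hru : RainbowUnion c ((Pu 0).edges ++ (Pu 1).edges ++ (Pu 2).edges))
    (hrv : RainbowUnion c ((Pv 0).edges ++ (Pv 1).edges ++ (Pv 2).edges))
    (hrw : RainbowUnion c ((Pw 0).edges ++ (Pw 1).edges ++ (Pw 2).edges))
    -- the three systems are pairwise edge-disjoint
    (heuv : ∀ i j : Fin 3, List.Disjoint (Pu i).edges (Pv j).edges)
    (heuw : ∀ i j : Fin 3, List.Disjoint (Pu i).edges (Pw j).edges)
    (hevw : ∀ i j : Fin 3, List.Disjoint (Pv i).edges (Pw j).edges) :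
    (∃ i j k : Fin 3,
        RainbowUnion c ((Pu i).edges ++ (Pv j).edges ++ (Pw k).edges)) ↔
      (¬ ((Pu 0).edges.map c = (Pv 0).edges.map c ∧
          (Pv 0).edges.map c = (Pw 0).edges.map c)) ∨
      (∃ s t : Fin 3, s ≠ 0 ∧ t ≠ 0 ∧
        (List.Disjoint ((Pu s).edges.map c) ((Pv t).edges.map c) ∨
         List.Disjoint ((Pu s).edges.map c) ((Pw t).edges.map c) ∨
         List.Disjoint ((Pv s).edges.map c) ((Pw t).edges.map c))) :=
  stmt19_general G c u v w du dv dw Pu Pv Pw hlu hlv hlw hru hrv hrw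
end
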